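/- arXiv:2305.09248 — 2 statements merged into one kernel-verified Lean document; each statement's English description precedes it below -/
import Mathlib

section
/- Let A be a rainbow-bisecting empty circular annulus (RBCA) for P whose width is greater than or equal to the width of every RBCA for P (a maximum-width RBCA). Then the inner circle of A (the circle of radius r_in about its center) contains at least one point of P, and the outer circle of A (the circle of radius r_out about its center) contains at least one point of P. -/
/-- The Euclidean plane. -/
abbrev Plane : Type := EuclideanSpace ℝ (Fin 2)

/-- A set of points is rainbow if it contains at least one point of each of the `k` colors. -/
def IsRainbow (k : ℕ) (α : Plane → Fin k) (S : Set Plane) : Prop :=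
  ∀ i : Fin k, ∃ p ∈ S, α p = i

/-- A rainbow-bisecting empty circular annulus (RBCA) for `P`, with center `c`, inner
radius `rin` and outer radius `rout` (its width is `rout - rin`): its open interior
contains no point of `P`, the points of `P` at distance at most `rin` from `c` form a
rainbow set, and the points of `P` at distance at least `rout` from `c` form a rainbow
set. -/
def IsRBCA (k : ℕ) (P : Finset Plane) (α : Plane → Fin k)
    (c : Plane) (rin rout : ℝ) : Prop :=
  0 ≤ rin ∧ rin ≤ rout ∧
  (∀ p ∈ P, ¬ (rin < dist p c ∧ dist p c < rout)) ∧
  IsRainbow k α {p | p ∈ P ∧ dist p c ≤ rin} ∧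
  IsRainbow k α {p | p ∈ P ∧ rout ≤ dist p c}

set_option maxHeartbeats 1000000 in
/-- A maximum-width RBCA has a point of `P` on its inner circle and a point of `P` on
its outer circle. -/
theorem maxWidth_RBCA_boundary_points (k : ℕ) (P : Finset Plane) (α : Plane → Fin k)
    (htwo : ∀ i : Fin k, ∃ p ∈ P, ∃ q ∈ P, p ≠ q ∧ α p = i ∧ α q = i)
    (c : Plane) (rin rout : ℝ) (hA : IsRBCA k P α c rin rout)
    (hmax : ∀ c' rin' rout', IsRBCA k P α c' rin' rout' → rout' - rin' ≤ rout - rin) :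
    (∃ p ∈ P, dist p c = rin) ∧ (∃ p ∈ P, dist p c = rout) := by
  classical
  obtain ⟨hr0, hrr, hempty, hin, hout⟩ := hA
  rcases Nat.eq_zero_or_pos k with hk | hk
  · -- k = 0 : arbitrarily wide RBCAs exist, contradicting maximality
    exfalso
    subst hk
    obtain ⟨R, hR⟩ := Finset.exists_le (P.image (fun p => dist p c))
    set R' := max R 0 with hR'
    have hRle : ∀ p ∈ P, dist p c ≤ R' := by
      intro p hp
      exact le_trans (hR _ (Finset.mem_image_of_mem _ hp)) (le_max_left _ _)
    have h := hmax c R' (R' + (rout - rin) + 1)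
      ⟨le_max_right _ _, by linarith, ?_, ?_, ?_⟩
    · linarith
    · intro p hp h'
      exact absurd (hRle p hp) (not_le.2 h'.1)
    · intro i; exact i.elim0
    · intro i; exact i.elim0
  · have i0 : Fin k := ⟨0, hk⟩
    constructor
    · -- inner circle
      by_contra h
      push_neg at h
      obtain ⟨p0, hp0, _⟩ := hin i0
      have hS : (P.filter (fun p => dist p c ≤ rin)).Nonempty :=
        ⟨p0, Finset.mem_filter.2 ⟨hp0.1, hp0.2⟩⟩
      set r' := (P.filter (fun p => dist p c ≤ rin)).sup' hS (fun p => dist p c) with hr'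
      have hr'le : r' < rin := by
        rw [hr', Finset.sup'_lt_iff]
        intro p hp
        have hp' := Finset.mem_filter.1 hp
        exact lt_of_le_of_ne hp'.2 (h p hp'.1)
      have hr'0 : 0 ≤ r' :=
        le_trans dist_nonneg (Finset.le_sup' (fun p => dist p c) (Finset.mem_filter.2 ⟨hp0.1, hp0.2⟩))
      have hnew : IsRBCA k P α c r' rout := by
        refine ⟨hr'0, by linarith, ?_, ?_, hout⟩
        · intro p hp hcon
          by_cases hd : dist p c ≤ rin
          · exact absurd (Finset.le_sup' (fun p => dist p c)
              (Finset.mem_filter.2 ⟨hp, hd⟩)) (not_le.2 hcon.1)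
          · exact hempty p hp ⟨not_le.1 hd, hcon.2⟩
        · intro i
          obtain ⟨p, hp, hpi⟩ := hin i
          exact ⟨p, ⟨hp.1, Finset.le_sup' (fun p => dist p c)
            (Finset.mem_filter.2 ⟨hp.1, hp.2⟩)⟩, hpi⟩
      have := hmax c r' rout hnew
      linarith
    · -- outer circle
      by_contra h
      push_neg at h
      obtain ⟨p0, hp0, _⟩ := hout i0
      have hS : (P.filter (fun p => rout ≤ dist p c)).Nonempty :=
        ⟨p0, Finset.mem_filter.2 ⟨hp0.1, hp0.2⟩⟩
      set r' := (P.filter (fun p => rout ≤ dist p c)).inf' hS (fun p => dist p c) with hr'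
      have hr'ge : rout < r' := by
        rw [hr', Finset.lt_inf'_iff]
        intro p hp
        have hp' := Finset.mem_filter.1 hp
        exact lt_of_le_of_ne hp'.2 (Ne.symm (h p hp'.1))
      have hnew : IsRBCA k P α c rin r' := by
        refine ⟨hr0, by linarith, ?_, hin, ?_⟩
        · intro p hp hcon
          by_cases hd : rout ≤ dist p c
          · exact absurd (Finset.inf'_le (fun p => dist p c)
              (Finset.mem_filter.2 ⟨hp, hd⟩)) (not_le.2 hcon.2)
          · exact hempty p hp ⟨hcon.1, not_le.1 hd⟩
        · intro i
          obtain ⟨p, hp, hpi⟩ := hout i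
          exact ⟨p, ⟨hp.1, Finset.inf'_le (fun p => dist p c)
            (Finset.mem_filter.2 ⟨hp.1, hp.2⟩)⟩, hpi⟩
      have := hmax c rin r' hnew
      linarith
end

section
/- Let F be the family of all rainbow-bisecting empty circular annuli (RBCAs) for P whose closed inner disk contains at least two points of P. Suppose F is nonempty and A ∈ F has width greater than or equal to the width of every member of F. Then there exists A' ∈ F of the same width as A satisfying one of the following two configurations: (i) A' is not special and each of the inner circle and the outer circle of A' contains at least two points of P on its boundary; (ii) A' is special, the outer circle of A' contains at least one point of P, and the inner circle of A' contains at least two points of P. -/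
/-- `A ∈ F`: an RBCA for `P` whose closed inner disk contains at least two points of `P`. -/
def InF (k : ℕ) (P : Finset Plane) (α : Plane → Fin k)
    (c : Plane) (rin rout : ℝ) : Prop :=
  IsRBCA k P α c rin rout ∧
  ∃ p ∈ P, ∃ q ∈ P, p ≠ q ∧ dist p c ≤ rin ∧ dist q c ≤ rin

/-- An RBCA is special if some point of `P` on the inner circle lies on the segment
joining the center to a point of `P` on the outer circle. -/
def IsSpecial (P : Finset Plane) (c : Plane) (rin rout : ℝ) : Prop :=
  ∃ p1 ∈ P, ∃ p2 ∈ P, dist p1 c = rin ∧ dist p2 c = rout ∧ p1 ∈ segment ℝ c p2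

open AffineMap Filter Topology

theorem Finset.exists_pos_forall_imp_le {ι : Type*} (s : Finset ι) {p : ι → Prop}
    {f : ι → ℝ} (h : ∀ i ∈ s, p i → 0 < f i) :
    ∃ δ > 0, ∀ i ∈ s, p i → δ ≤ f i := by
  have hev : ∀ᶠ δ in 𝓝 (0 : ℝ), ∀ i ∈ s, p i → δ < f i :=
    (eventually_all_finset s).2 fun i hi =>
      eventually_imp_distrib_left.2 fun hpi => eventually_lt_nhds (h i hi hpi)
  obtain ⟨δ, hδ, hδpos⟩ :=
    ((hev.filter_mono (nhdsWithin_le_nhds (s := Set.Ioi 0))).and self_mem_nhdsWithin).exists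
  exact ⟨δ, hδpos, fun i hi hpi => (hδ i hi hpi).le⟩

section
variable {E : Type*} [NormedAddCommGroup E] [NormedSpace ℝ E]

theorem wbtw_of_sameRay_of_dist_le {v c p q : E} (hv : v ≠ 0) (hp : SameRay ℝ v (p - c))
    (hq : SameRay ℝ v (q - c)) (hd : dist p c ≤ dist q c) : Wbtw ℝ c p q := by
  have h : SameRay ℝ (p - c) (q - c) := hp.symm.trans hq fun h0 => absurd h0 hv
  rw [wbtw_iff_sameRay_vsub, vsub_eq_sub, vsub_eq_sub]
  rcases eq_or_ne (p - c) 0 with hpc | hpc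
  · rw [hpc]; exact SameRay.zero_left _
  obtain ⟨r, hr0, hr⟩ := h.exists_nonneg_left hpc
  have hr1 : 1 ≤ r := by
    rw [dist_eq_norm, dist_eq_norm, ← hr, norm_smul, Real.norm_of_nonneg hr0] at hd
    exact le_of_mul_le_mul_right (by simpa using hd) (norm_pos_iff.2 hpc)
  have : q - p = (r - 1) • (p - c) := by rw [sub_smul, hr, one_smul]; abel
  rw [this]
  exact SameRay.sameRay_nonneg_smul_right _ (sub_nonneg.2 hr1)

theorem exists_lineMap_dist_eq_of_forall_dist_le (S : Finset E) (hS : S.Nonempty) {c p : E}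
    (h : ∀ x ∈ S, dist x c ≤ dist p c) :
    ∃ s ∈ Set.Icc (0 : ℝ) 1,
      (∀ x ∈ S, dist x (lineMap c p s) ≤ dist p (lineMap c p s)) ∧
      ∃ x ∈ S, dist x (lineMap c p s) = dist p (lineMap c p s) := by
  set g : E → ℝ → ℝ := fun x s => dist x (lineMap c p s) - dist p (lineMap c p s)
  have hmono : ∀ x, MonotoneOn (g x) (Set.Icc 0 1) := by
    intro x s hs s' hs' hss'
    have h1 := dist_triangle x (lineMap c p s') (lineMap c p s)
    rw [dist_lineMap_lineMap, Real.dist_eq, abs_of_nonneg (sub_nonneg.2 hss')] at h1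
    simp only [g, dist_comm p, dist_lineMap_right, Real.norm_eq_abs,
      abs_of_nonneg (sub_nonneg.2 hs.2), abs_of_nonneg (sub_nonneg.2 hs'.2)]
    nlinarith
  have hroot : ∀ x ∈ S, ∃ s ∈ Set.Icc (0 : ℝ) 1, g x s = 0 := by
    intro x hx
    refine intermediate_value_Icc zero_le_one (Continuous.continuousOn (by fun_prop)) ?_
    simp only [g, lineMap_apply_zero, lineMap_apply_one, dist_self, sub_zero]
    exact ⟨sub_nonpos.2 (h x hx), dist_nonneg⟩
  -- Each `g x` is monotone, so the earliest of these roots works for every point of `S`.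
  choose! σ hσ hσ0 using hroot
  obtain ⟨x, hx, hmin⟩ := S.exists_min_image σ hS
  refine ⟨σ x, hσ x hx, fun y hy => ?_, x, hx, sub_eq_zero.1 (hσ0 x hx)⟩
  have := hmono y (hσ x hx) (hσ y hy) (hmin y hy)
  rw [hσ0 y hy] at this
  exact sub_nonpos.1 this
end

section
variable {k : ℕ} {P : Finset Plane} {α : Plane → Fin k} {c : Plane} {rin rout : ℝ}

theorem InF.rin_pos (hA : InF k P α c rin rout) : 0 < rin := by
  obtain ⟨-, p, -, q, -, hpq, hp, hq⟩ := hA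
  by_contra! h
  exact hpq ((dist_le_zero.1 (hp.trans h)).trans (dist_le_zero.1 (hq.trans h)).symm)

theorem InF.of_forall (hA : InF k P α c rin rout) {z : Plane} {ri ro : ℝ} (hrio : ri ≤ ro)
    (hin : ∀ x ∈ P, dist x c ≤ rin → dist x z ≤ ri)
    (hout : ∀ y ∈ P, rout ≤ dist y c → ro ≤ dist y z) : InF k P α z ri ro := by
  obtain ⟨⟨-, -, hempty, hinrb, houtrb⟩, p, hp, q, hq, hpq, hpc, hqc⟩ := hA
  refine ⟨⟨dist_nonneg.trans (hin p hp hpc), hrio, fun x hx ⟨h₁, h₂⟩ => ?_, fun i => ?_,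
    fun i => ?_⟩, p, hp, q, hq, hpq, hin p hp hpc, hin q hq hqc⟩
  · rcases le_or_gt (dist x c) rin with h | h
    · linarith [hin x hx h]
    · linarith [hout x hx (not_lt.1 fun h' => hempty x hx ⟨h, h'⟩)]
  · obtain ⟨x, ⟨hx, hxc⟩, rfl⟩ := hinrb i
    exact ⟨x, ⟨hx, hin x hx hxc⟩, rfl⟩
  · obtain ⟨y, ⟨hy, hyc⟩, rfl⟩ := houtrb i
    exact ⟨y, ⟨hy, hout y hy hyc⟩, rfl⟩

theorem InF.sub_le_of_forall (hA : InF k P α c rin rout)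
    (hmax : ∀ c' rin' rout', InF k P α c' rin' rout' → rout' - rin' ≤ rout - rin)
    {z : Plane} {a b : ℝ} (hin : ∀ x ∈ P, dist x c ≤ rin → dist x z ≤ a)
    (hout : ∀ y ∈ P, rout ≤ dist y c → b ≤ dist y z) : b - a ≤ rout - rin := by
  rcases le_or_gt a b with hab | hab
  · exact hmax z a b (hA.of_forall hab hin hout)
  · linarith [hA.1.2.1]

theorem InF.sub_lt_of_forall_lt_dist (hA : InF k P α c rin rout)
    (hmax : ∀ c' rin' rout', InF k P α c' rin' rout' → rout' - rin' ≤ rout - rin)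
    {z : Plane} {a b : ℝ} (hin : ∀ x ∈ P, dist x c ≤ rin → dist x z ≤ a)
    (hout : ∀ y ∈ P, rout ≤ dist y c → b < dist y z) : b - a < rout - rin := by
  obtain ⟨δ, hδ, hδle⟩ :=
    P.exists_pos_forall_imp_le fun y hy hyc => sub_pos.2 (hout y hy hyc)
  linarith [hA.sub_le_of_forall hmax (b := b + δ) hin fun y hy hyc => by
    linarith [hδle y hy hyc]]

theorem InF.sub_lt_of_forall_dist_lt (hA : InF k P α c rin rout)
    (hmax : ∀ c' rin' rout', InF k P α c' rin' rout' → rout' - rin' ≤ rout - rin)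
    {z : Plane} {a b : ℝ} (hin : ∀ x ∈ P, dist x c ≤ rin → dist x z < a)
    (hout : ∀ y ∈ P, rout ≤ dist y c → b ≤ dist y z) : b - a < rout - rin := by
  obtain ⟨δ, hδ, hδle⟩ :=
    P.exists_pos_forall_imp_le fun x hx hxc => sub_pos.2 (hin x hx hxc)
  linarith [hA.sub_le_of_forall hmax (a := a - δ) (fun x hx hxc => by
    linarith [hδle x hx hxc]) hout]

theorem InF.exists_dist_eq_rin (hA : InF k P α c rin rout)
    (hmax : ∀ c' rin' rout', InF k P α c' rin' rout' → rout' - rin' ≤ rout - rin) :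
    ∃ p ∈ P, dist p c = rin := by
  by_contra! h
  exact (hA.sub_lt_of_forall_dist_lt hmax (fun x hx hxc => hxc.lt_of_ne (h x hx))
    fun y _ hyc => hyc).false

theorem InF.exists_dist_eq_rout (hA : InF k P α c rin rout)
    (hmax : ∀ c' rin' rout', InF k P α c' rin' rout' → rout' - rin' ≤ rout - rin) :
    ∃ q ∈ P, dist q c = rout := by
  by_contra! h
  exact (hA.sub_lt_of_forall_lt_dist hmax (fun x _ hxc => hxc)
    fun y hy hyc => hyc.lt_of_ne (h y hy).symm).false

theorem InF.exists_ne_dist_eq_rin (hA : InF k P α c rin rout)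
    (hmax : ∀ c' rin' rout', InF k P α c' rin' rout' → rout' - rin' ≤ rout - rin)
    (hns : ¬ IsSpecial P c rin rout) {p : Plane} (hpP : p ∈ P) (hp : dist p c = rin) :
    ∃ q ∈ P, q ≠ p ∧ dist q c = rin := by
  by_contra! honly
  have hrin := hA.rin_pos
  obtain ⟨δ, hδ, hδle⟩ :=
    P.exists_pos_forall_imp_le (p := fun x => dist x c ≤ rin ∧ x ≠ p)
      (f := fun x => (rin - dist x c) / 2) fun x hx hxc => by
        linarith [hxc.1.lt_of_ne (honly x hx hxc.2)]
  set ε := min δ rin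
  have hε : 0 < ε := lt_min hδ hrin
  have hs : ε / rin ∈ Set.Icc (0 : ℝ) 1 :=
    ⟨by positivity, (div_le_one hrin).2 (min_le_right _ _)⟩
  set z := lineMap c p (ε / rin)
  have hzc : dist z c = ε := by
    rw [dist_lineMap_left, dist_comm, hp, Real.norm_of_nonneg hs.1, div_mul_cancel₀ _ hrin.ne']
  have hpz : dist p z = rin - ε := by
    rw [dist_comm, dist_lineMap_right, dist_comm, hp, Real.norm_of_nonneg (sub_nonneg.2 hs.2),
      sub_mul, div_mul_cancel₀ _ hrin.ne', one_mul]
  have hin : ∀ x ∈ P, dist x c ≤ rin → dist x z ≤ rin - ε := by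
    intro x hx hxc
    rcases eq_or_ne x p with rfl | hxp
    · exact hpz.le
    · linarith [dist_triangle x c z, dist_comm z c, hδle x hx ⟨hxc, hxp⟩, min_le_left δ rin]
  have hout : ∀ y ∈ P, rout ≤ dist y c → rout - ε < dist y z := by
    intro y hy hyc
    by_contra! hyz
    have hyzc : Wbtw ℝ y z c := dist_add_dist_eq_iff.1 (by linarith [dist_triangle y z c])
    have hcpy : Wbtw ℝ c p y :=
      wbtw_of_sameRay_of_dist_le (vsub_ne_zero.2 (dist_pos.1 (hzc ▸ hε)))
        (Wbtw.sameRay_vsub_left ⟨ε / rin, hs, rfl⟩) hyzc.symm.sameRay_vsub_left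
        (by linarith [hA.1.2.1])
    exact hns ⟨p, hpP, y, hy, hp, by linarith [dist_triangle y z c],
      mem_segment_iff_wbtw.2 hcpy⟩
  exact (hA.sub_lt_of_forall_lt_dist hmax hin hout).ne (by ring)

theorem InF.exists_ne_dist_eq_rout (hA : InF k P α c rin rout)
    (hmax : ∀ c' rin' rout', InF k P α c' rin' rout' → rout' - rin' ≤ rout - rin)
    (hns : ¬ IsSpecial P c rin rout) {q : Plane} (hqP : q ∈ P) (hq : dist q c = rout) :
    ∃ p ∈ P, p ≠ q ∧ dist p c = rout := by
  by_contra! honly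
  have hrout : 0 < rout := hA.rin_pos.trans_le hA.1.2.1
  obtain ⟨ε, hε, hεle⟩ :=
    P.exists_pos_forall_imp_le (p := fun y => rout ≤ dist y c ∧ y ≠ q)
      (f := fun y => (dist y c - rout) / 2) fun y hy hyc => by
        linarith [hyc.1.lt_of_ne (honly y hy hyc.2).symm]
  set z := lineMap c q (-(ε / rout))
  have hzc : dist z c = ε := by
    rw [dist_lineMap_left, dist_comm, hq, norm_neg, Real.norm_of_nonneg (by positivity),
      div_mul_cancel₀ _ hrout.ne']
  have hqz : dist q z = rout + ε := by
    rw [dist_comm, dist_lineMap_right, dist_comm, hq, sub_neg_eq_add,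
      Real.norm_of_nonneg (by positivity), add_mul, div_mul_cancel₀ _ hrout.ne', one_mul]
  have hzcq : Wbtw ℝ z c q := dist_add_dist_eq_iff.1 (by linarith [dist_comm c q, dist_comm z q])
  have hout : ∀ y ∈ P, rout ≤ dist y c → rout + ε ≤ dist y z := by
    intro y hy hyc
    rcases eq_or_ne y q with rfl | hyq
    · exact hqz.ge
    · linarith [dist_triangle y z c, hεle y hy ⟨hyc, hyq⟩]
  have hin : ∀ x ∈ P, dist x c ≤ rin → dist x z < rin + ε := by
    intro x hx hxc
    by_contra! hxz
    have hxcz : Wbtw ℝ x c z :=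
      dist_add_dist_eq_iff.1 (by linarith [dist_triangle x c z, dist_comm z c])
    have hcxq : Wbtw ℝ c x q :=
      wbtw_of_sameRay_of_dist_le (vsub_ne_zero.2 (dist_pos.1 (dist_comm z c ▸ hzc ▸ hε)))
        hxcz.symm.sameRay_vsub hzcq.sameRay_vsub (by linarith [hA.1.2.1])
    exact hns ⟨x, hx, q, hqP, by linarith [dist_triangle x c z, dist_comm z c], hq,
      mem_segment_iff_wbtw.2 hcxq⟩
  exact (hA.sub_lt_of_forall_dist_lt hmax hin hout).ne (by ring)

theorem InF.exists_isSpecial_two_dist_eq_rin (hA : InF k P α c rin rout)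
    (hsp : IsSpecial P c rin rout) :
    ∃ c' rin' rout', InF k P α c' rin' rout' ∧ rout' - rin' = rout - rin ∧
      IsSpecial P c' rin' rout' ∧ (∃ q ∈ P, dist q c' = rout') ∧
      ∃ p ∈ P, ∃ q ∈ P, p ≠ q ∧ dist p c' = rin' ∧ dist q c' = rin' := by
  obtain ⟨p, hpP, q, hqP, hp, hq, hpq⟩ := hsp
  rw [mem_segment_iff_wbtw] at hpq
  set S := (P.filter (dist · c ≤ rin)).erase p
  have hS : S.Nonempty := by
    obtain ⟨-, x, hx, y, hy, hxy, hxc, hyc⟩ := hA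
    rcases eq_or_ne x p with rfl | hxp
    · exact ⟨y, Finset.mem_erase.2 ⟨hxy.symm, Finset.mem_filter.2 ⟨hy, hyc⟩⟩⟩
    · exact ⟨x, Finset.mem_erase.2 ⟨hxp, Finset.mem_filter.2 ⟨hx, hxc⟩⟩⟩
  obtain ⟨s, hs, hSle, x, hxS, hx⟩ :=
    exists_lineMap_dist_eq_of_forall_dist_le S hS (c := c) (p := p) fun x hx =>
      hp ▸ (Finset.mem_filter.1 (Finset.mem_of_mem_erase hx)).2
  set z := lineMap c p s
  have hczp : Wbtw ℝ c z p := ⟨s, hs, rfl⟩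
  have hpz : dist p z = rin - dist c z := by
    linarith [hczp.dist_add_dist, dist_comm p c, dist_comm p z]
  have hqz : dist q z = rout - dist c z := by
    linarith [(hpq.trans_left hczp).dist_add_dist, dist_comm q c, dist_comm q z]
  refine ⟨z, dist p z, dist q z, hA.of_forall ?_ ?_ ?_, by rw [hpz, hqz]; ring,
    ⟨p, hpP, q, hqP, rfl, rfl, mem_segment_iff_wbtw.2 (hpq.trans_left_right hczp)⟩,
    ⟨q, hqP, rfl⟩, p, hpP, x, (Finset.mem_of_mem_erase hxS |> Finset.mem_filter.1).1,
    (Finset.ne_of_mem_erase hxS).symm, rfl, hx⟩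
  · linarith [hA.1.2.1]
  · intro y hy hyc
    rcases eq_or_ne y p with rfl | hyp
    · exact le_rfl
    · exact hSle y (Finset.mem_erase.2 ⟨hyp, Finset.mem_filter.2 ⟨hy, hyc⟩⟩)
  · intro y _ hyc
    linarith [dist_triangle y z c, dist_comm z c]

end

theorem maxWidth_RBCA_configurations_general (k : ℕ) (P : Finset Plane) (α : Plane → Fin k)
    (c : Plane) (rin rout : ℝ) (hA : InF k P α c rin rout)
    (hmax : ∀ c' rin' rout', InF k P α c' rin' rout' → rout' - rin' ≤ rout - rin) :
    ∃ c' rin' rout', InF k P α c' rin' rout' ∧ rout' - rin' = rout - rin ∧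
      ((¬ IsSpecial P c' rin' rout' ∧
        (∃ p ∈ P, ∃ q ∈ P, p ≠ q ∧ dist p c' = rin' ∧ dist q c' = rin') ∧
        (∃ p ∈ P, ∃ q ∈ P, p ≠ q ∧ dist p c' = rout' ∧ dist q c' = rout')) ∨
       (IsSpecial P c' rin' rout' ∧
        (∃ p ∈ P, dist p c' = rout') ∧
        (∃ p ∈ P, ∃ q ∈ P, p ≠ q ∧ dist p c' = rin' ∧ dist q c' = rin'))) := by
  by_cases hsp : IsSpecial P c rin rout
  · obtain ⟨c', rin', rout', hA', hwidth, hconf⟩ := hA.exists_isSpecial_two_dist_eq_rin hsp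
    exact ⟨c', rin', rout', hA', hwidth, Or.inr hconf⟩
  · obtain ⟨p, hpP, hp⟩ := hA.exists_dist_eq_rin hmax
    obtain ⟨p', hp'P, hp'p, hp'⟩ := hA.exists_ne_dist_eq_rin hmax hsp hpP hp
    obtain ⟨q, hqP, hq⟩ := hA.exists_dist_eq_rout hmax
    obtain ⟨q', hq'P, hq'q, hq'⟩ := hA.exists_ne_dist_eq_rout hmax hsp hqP hq
    exact ⟨c, rin, rout, hA, rfl, Or.inl ⟨hsp, ⟨p', hp'P, p, hpP, hp'p, hp', hp⟩,
      ⟨q', hq'P, q, hqP, hq'q, hq', hq⟩⟩⟩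

/-- A maximum-width member of `F` can be replaced by a member of `F` of the same width
that either (i) is not special and has at least two points of `P` on each of its inner
and outer circles, or (ii) is special, has a point of `P` on its outer circle and at
least two points of `P` on its inner circle. -/
theorem maxWidth_RBCA_configurations (k : ℕ) (P : Finset Plane) (α : Plane → Fin k)
    (htwo : ∀ i : Fin k, ∃ p ∈ P, ∃ q ∈ P, p ≠ q ∧ α p = i ∧ α q = i)
    (hconcyclic : ∀ (c : Plane) (r : ℝ), {p : Plane | p ∈ P ∧ dist p c = r}.ncard ≤ 3)
    (c : Plane) (rin rout : ℝ) (hA : InF k P α c rin rout)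
    (hmax : ∀ c' rin' rout', InF k P α c' rin' rout' → rout' - rin' ≤ rout - rin) :
    ∃ c' rin' rout', InF k P α c' rin' rout' ∧ rout' - rin' = rout - rin ∧
      ((¬ IsSpecial P c' rin' rout' ∧
        (∃ p ∈ P, ∃ q ∈ P, p ≠ q ∧ dist p c' = rin' ∧ dist q c' = rin') ∧
        (∃ p ∈ P, ∃ q ∈ P, p ≠ q ∧ dist p c' = rout' ∧ dist q c' = rout')) ∨
       (IsSpecial P c' rin' rout' ∧
        (∃ p ∈ P, dist p c' = rout') ∧
        (∃ p ∈ P, ∃ q ∈ P, p ≠ q ∧ dist p c' = rin' ∧ dist q c' = rin'))) :=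
  maxWidth_RBCA_configurations_general k P α c rin rout hA hmax
end
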